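/- Smallness of the Miyadera–Voigt integral: for every q ∈ (0,1) there exists t₀ ∈ (0,r] such that for all d ∈ ℝⁿ and all measurable square-integrable η : [−r,0] → ℝⁿ, ∫₀^{t₀} ‖Φ( T_t d + T₀(t)η )‖ dt ≤ q · ( ‖d‖ + ‖η‖_{L²([−r,0];ℝⁿ)} ). -/

import Mathlib

open MeasureTheory Set

/-- `e^{sB}` as an operator on Euclidean space `ℝⁿ`, for `B = diag b`. -/
noncomputable def expB {n : ℕ} (b : Fin n → ℝ) (s : ℝ) :
    EuclideanSpace ℝ (Fin n) →L[ℝ] EuclideanSpace ℝ (Fin n) :=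
  Matrix.toEuclideanCLM (𝕜 := ℝ) (NormedSpace.exp (s • Matrix.diagonal b))

/-- The nilpotent left-shift operator: `(T₀(t)η)(θ) = η(t+θ)` if `t+θ ≤ 0`, else `0`. -/
noncomputable def shiftT0 {n : ℕ} (t : ℝ) (η : ℝ → EuclideanSpace ℝ (Fin n)) :
    ℝ → EuclideanSpace ℝ (Fin n) :=
  fun θ => if t + θ ≤ 0 then η (t + θ) else 0

/-- The boundary-delay flow: `(T_t d)(θ) = e^{(t+θ)B} d` if `-t < θ`, else `0`. -/
noncomputable def delayT {n : ℕ} (b : Fin n → ℝ) (t : ℝ) (d : EuclideanSpace ℝ (Fin n)) :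
    ℝ → EuclideanSpace ℝ (Fin n) :=
  fun θ => if -t < θ then expB b (t + θ) d else 0

/-- The delay operator `Φ(ξ) := ∫_{[-r,0]} ξ dμ⁺ - ∫_{[-r,0]} ξ dμ⁻`, where `(μ⁺, μ⁻)` is the
Jordan decomposition of a Borel measure `μ` of bounded variation on `[-r,0]`. -/
noncomputable def delayPhi {n : ℕ} (r : ℝ) (μp μm : Measure ℝ)
    (ξ : ℝ → EuclideanSpace ℝ (Fin n)) : EuclideanSpace ℝ (Fin n) :=
  (∫ θ in Icc (-r) 0, ξ θ ∂μp) - ∫ θ in Icc (-r) 0, ξ θ ∂μm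

/-! Φ is dominated by integration against `μ⁺ + μ⁻` on `[-r,0]`. For `t ≤ r` the boundary part
`T_t d` is bounded pointwise by `e^{r‖b‖} ‖d‖`, so it contributes `O(t₀) ‖d‖`. For the shift part,
Tonelli swaps the two integrals and Cauchy–Schwarz in `t` gives
`∫₀^{t₀} ‖η(t+θ)‖ dt ≤ √t₀ ‖η‖_{L²}`, so it contributes `O(√t₀) ‖η‖_{L²}`. Both vanish as
`t₀ → 0`. -/

open Filter Topology
open scoped ENNReal

lemma expB_apply {n : ℕ} (b : Fin n → ℝ) (s : ℝ) (d : EuclideanSpace ℝ (Fin n)) (i : Fin n) :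
    expB b s d i = Real.exp (s * b i) * d i := by
  rw [expB, ← Matrix.diagonal_smul, Matrix.exp_diagonal]
  change (Matrix.diagonal (NormedSpace.exp (s • b))).mulVec d i = _
  rw [Matrix.mulVec_diagonal, Pi.coe_exp, Pi.smul_apply, smul_eq_mul, ← Real.exp_eq_exp_ℝ]

lemma norm_expB_apply_le {n : ℕ} (b : Fin n → ℝ) (s : ℝ) (d : EuclideanSpace ℝ (Fin n)) :
    ‖expB b s d‖ ≤ Real.exp (|s| * ‖b‖) * ‖d‖ := by
  set c := Real.exp (|s| * ‖b‖)
  have hcoord (i : Fin n) : ‖expB b s d i‖ ≤ c * ‖d i‖ := by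
    rw [expB_apply, norm_mul, Real.norm_of_nonneg (Real.exp_pos _).le]
    gcongr
    refine Real.exp_le_exp.2 ?_
    calc s * b i ≤ |s * b i| := le_abs_self _
      _ = |s| * ‖b i‖ := by rw [abs_mul, Real.norm_eq_abs]
      _ ≤ |s| * ‖b‖ := by gcongr; exact norm_le_pi_norm b i
  refine le_of_pow_le_pow_left₀ two_ne_zero (by positivity) ?_
  rw [EuclideanSpace.norm_sq_eq, mul_pow, EuclideanSpace.norm_sq_eq, Finset.mul_sum]
  gcongr with i
  rw [← mul_pow]
  exact pow_le_pow_left₀ (norm_nonneg _) (hcoord i) 2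

lemma norm_delayT_le {n : ℕ} (b : Fin n → ℝ) {r t θ : ℝ} (ht : t ≤ r) (hθ : θ ≤ 0)
    (d : EuclideanSpace ℝ (Fin n)) :
    ‖delayT b t d θ‖ ≤ Real.exp (r * ‖b‖) * ‖d‖ := by
  unfold delayT
  split_ifs with h
  · refine (norm_expB_apply_le b _ d).trans ?_
    gcongr
    rw [abs_of_pos (by linarith)]
    linarith
  · rw [norm_zero]
    positivity

lemma enorm_delayPhi_le {n : ℕ} (r : ℝ) (μp μm : Measure ℝ) (ξ : ℝ → EuclideanSpace ℝ (Fin n)) :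
    ‖delayPhi r μp μm ξ‖ₑ ≤ ∫⁻ θ in Icc (-r) 0, ‖ξ θ‖ₑ ∂(μp + μm) := by
  rw [Measure.restrict_add, lintegral_add_measure]
  exact enorm_sub_le.trans
    (add_le_add (enorm_integral_le_lintegral_enorm _) (enorm_integral_le_lintegral_enorm _))

lemma enorm_delayPhi_delayT_add_shiftT0_le {n : ℕ} (b : Fin n → ℝ) {r t : ℝ} (ht : t ≤ r)
    (μp μm : Measure ℝ) (d : EuclideanSpace ℝ (Fin n)) (η : ℝ → EuclideanSpace ℝ (Fin n)) :
    ‖delayPhi r μp μm (fun θ => delayT b t d θ + shiftT0 t η θ)‖ₑ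
      ≤ ENNReal.ofReal (Real.exp (r * ‖b‖) * ‖d‖) * (μp + μm) (Icc (-r) 0)
        + ∫⁻ θ in Icc (-r) 0, ‖shiftT0 t η θ‖ₑ ∂(μp + μm) := by
  refine (enorm_delayPhi_le r μp μm _).trans ?_
  calc ∫⁻ θ in Icc (-r) 0, ‖delayT b t d θ + shiftT0 t η θ‖ₑ ∂(μp + μm)
      ≤ ∫⁻ θ in Icc (-r) 0, (ENNReal.ofReal (Real.exp (r * ‖b‖) * ‖d‖) + ‖shiftT0 t η θ‖ₑ)
          ∂(μp + μm) := by
        refine setLIntegral_mono' measurableSet_Icc fun θ hθ => ?_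
        refine (enorm_add_le _ _).trans (add_le_add_left ?_ _)
        rw [← ofReal_norm]
        exact ENNReal.ofReal_le_ofReal (norm_delayT_le b ht hθ.2 d)
    _ = _ := by rw [lintegral_add_left measurable_const, setLIntegral_const]

lemma measurable_shiftT0_uncurry {n : ℕ} {η : ℝ → EuclideanSpace ℝ (Fin n)} (hη : Measurable η) :
    Measurable fun p : ℝ × ℝ => shiftT0 p.1 η p.2 := by
  have hadd : Measurable fun p : ℝ × ℝ => p.1 + p.2 := measurable_fst.add measurable_snd
  exact Measurable.ite (measurableSet_le hadd measurable_const) (hη.comp hadd) measurable_const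

lemma lintegral_le_lintegral_sq_rpow_mul_measure_univ_rpow {α : Type*} [MeasurableSpace α]
    (μ : Measure α) {f : α → ℝ≥0∞} (hf : AEMeasurable f μ) :
    ∫⁻ a, f a ∂μ ≤ (∫⁻ a, f a ^ 2 ∂μ) ^ (1 / 2 : ℝ) * μ univ ^ (1 / 2 : ℝ) := by
  have h := ENNReal.lintegral_mul_le_Lp_mul_Lq μ Real.HolderConjugate.two_two hf
    aemeasurable_const (g := fun _ => 1)
  simpa [ENNReal.rpow_two] using h

lemma lintegral_enorm_shiftT0_sq_le {n : ℕ} {η : ℝ → EuclideanSpace ℝ (Fin n)}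
    (hη : Measurable η) {r θ : ℝ} (hθ : -r ≤ θ) (t₀ : ℝ) :
    ∫⁻ t in Ioc 0 t₀, ‖shiftT0 t η θ‖ₑ ^ 2 ≤ ∫⁻ u in Icc (-r) 0, ‖η u‖ₑ ^ 2 := by
  set G : ℝ → ℝ≥0∞ := (Ioc (-r) 0).indicator fun u => ‖η u‖ₑ ^ 2
  have hG : Measurable G := (hη.enorm.pow_const 2).indicator measurableSet_Ioc
  calc ∫⁻ t in Ioc 0 t₀, ‖shiftT0 t η θ‖ₑ ^ 2
      ≤ ∫⁻ t in Ioc 0 t₀, G (t + θ) := by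
        refine setLIntegral_mono' measurableSet_Ioc fun t ht => ?_
        unfold shiftT0
        split_ifs with h
        · exact (indicator_of_mem (show t + θ ∈ Ioc (-r) 0 from ⟨by linarith [ht.1], h⟩)
            fun u => ‖η u‖ₑ ^ 2).ge
        · simp
    _ ≤ ∫⁻ t, G (t + θ) := setLIntegral_le_lintegral _ _
    _ = ∫⁻ u, G u := lintegral_add_right_eq_self G θ
    _ ≤ ∫⁻ u in Icc (-r) 0, ‖η u‖ₑ ^ 2 := by
        rw [lintegral_indicator measurableSet_Ioc]
        exact lintegral_mono_set Ioc_subset_Icc_self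

lemma lintegral_lintegral_enorm_shiftT0_le {n : ℕ} {η : ℝ → EuclideanSpace ℝ (Fin n)}
    (hη : Measurable η) (r t₀ : ℝ) (ν : Measure ℝ) [SFinite ν] :
    ∫⁻ t in Ioc 0 t₀, ∫⁻ θ in Icc (-r) 0, ‖shiftT0 t η θ‖ₑ ∂ν
      ≤ ν (Icc (-r) 0) * ENNReal.ofReal t₀ ^ (1 / 2 : ℝ)
        * (∫⁻ u in Icc (-r) 0, ‖η u‖ₑ ^ 2) ^ (1 / 2 : ℝ) := by
  have hmeas := (measurable_shiftT0_uncurry hη).enorm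
  rw [lintegral_lintegral_swap hmeas.aemeasurable]
  calc ∫⁻ θ in Icc (-r) 0, (∫⁻ t in Ioc 0 t₀, ‖shiftT0 t η θ‖ₑ) ∂ν
      ≤ ∫⁻ θ in Icc (-r) 0,
          (∫⁻ u in Icc (-r) 0, ‖η u‖ₑ ^ 2) ^ (1 / 2 : ℝ) * ENNReal.ofReal t₀ ^ (1 / 2 : ℝ) ∂ν := by
        refine setLIntegral_mono' measurableSet_Icc fun θ hθ => ?_
        have hCS := lintegral_le_lintegral_sq_rpow_mul_measure_univ_rpow
          (volume.restrict (Ioc 0 t₀)) (f := fun t => ‖shiftT0 t η θ‖ₑ)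
          (hmeas.comp (measurable_id.prodMk measurable_const)).aemeasurable
        rw [Measure.restrict_apply_univ, Real.volume_Ioc, sub_zero] at hCS
        refine hCS.trans ?_
        gcongr ?_ ^ _ * _
        exact lintegral_enorm_shiftT0_sq_le hη hθ.1 t₀
    _ = ν (Icc (-r) 0) * ENNReal.ofReal t₀ ^ (1 / 2 : ℝ)
          * (∫⁻ u in Icc (-r) 0, ‖η u‖ₑ ^ 2) ^ (1 / 2 : ℝ) := by
        rw [setLIntegral_const]; ring

lemma lintegral_enorm_sq_eq_ofReal_integral {α E : Type*} [MeasurableSpace α]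
    [NormedAddCommGroup E] {μ : Measure α} {f : α → E}
    (hf : Integrable (fun a => ‖f a‖ ^ 2) μ) :
    ∫⁻ a, ‖f a‖ₑ ^ 2 ∂μ = ENNReal.ofReal (∫ a, ‖f a‖ ^ 2 ∂μ) := by
  rw [ofReal_integral_eq_lintegral_ofReal hf (ae_of_all _ fun _ => by positivity)]
  congr 1 with a
  rw [ENNReal.ofReal_pow (norm_nonneg _), ofReal_norm]

lemma exists_pos_le_and_mul_le_and_sqrt_mul_le {r q : ℝ} (hr : 0 < r) (hq : 0 < q) (A B : ℝ) :
    ∃ t₀ : ℝ, 0 < t₀ ∧ t₀ ≤ r ∧ t₀ * A ≤ q ∧ √t₀ * B ≤ q := by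
  have hA : Tendsto (fun t : ℝ => t * A) (𝓝[>] 0) (𝓝 0) := by
    simpa using ((by fun_prop : Continuous fun t : ℝ => t * A).tendsto 0).mono_left
      nhdsWithin_le_nhds
  have hB : Tendsto (fun t : ℝ => √t * B) (𝓝[>] 0) (𝓝 0) := by
    simpa using ((by fun_prop : Continuous fun t : ℝ => √t * B).tendsto 0).mono_left
      nhdsWithin_le_nhds
  obtain ⟨t₀, ⟨ht₀, ht₀r⟩, hAt, hBt⟩ := (Filter.Eventually.and (Ioc_mem_nhdsGT hr)
    ((hA.eventually (ge_mem_nhds hq)).and (hB.eventually (ge_mem_nhds hq)))).exists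
  exact ⟨t₀, ht₀, ht₀r, hAt, hBt⟩

theorem statement12_general
    (r : ℝ) (hr : 0 < r) (n : ℕ) (b : Fin n → ℝ)
    (μp μm : Measure ℝ) [IsFiniteMeasure μp] [IsFiniteMeasure μm]
    (q : ℝ) (hq0 : 0 < q) :
    ∃ t₀ : ℝ, 0 < t₀ ∧ t₀ ≤ r ∧
      ∀ (d : EuclideanSpace ℝ (Fin n)) (η : ℝ → EuclideanSpace ℝ (Fin n)),
        Measurable η → IntegrableOn (fun s => ‖η s‖ ^ 2) (Icc (-r) 0) →
        ∫ t in (0:ℝ)..t₀, ‖delayPhi r μp μm (fun θ => delayT b t d θ + shiftT0 t η θ)‖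
          ≤ q * (‖d‖ + Real.sqrt (∫ s in Icc (-r) 0, ‖η s‖ ^ 2)) := by
  set ν := μp + μm
  set C := Real.exp (r * ‖b‖)
  set M := (ν (Icc (-r) 0)).toReal
  obtain ⟨t₀, ht₀, ht₀r, hdelay, hshift⟩ :=
    exists_pos_le_and_mul_le_and_sqrt_mul_le hr hq0 (M * C) M
  refine ⟨t₀, ht₀, ht₀r, fun d η hη hη2 => ?_⟩
  set L := √(∫ s in Icc (-r) 0, ‖η s‖ ^ 2)
  have hν : ν (Icc (-r) 0) = ENNReal.ofReal M := (ENNReal.ofReal_toReal (measure_ne_top _ _)).symm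
  have hL : (∫⁻ u in Icc (-r) 0, ‖η u‖ₑ ^ 2) ^ (1 / 2 : ℝ) = ENNReal.ofReal L := by
    rw [lintegral_enorm_sq_eq_ofReal_integral hη2,
      ENNReal.ofReal_rpow_of_nonneg (by positivity) (by norm_num), ← Real.sqrt_eq_rpow]
  have hbound : ∫⁻ t in Ioc 0 t₀,
      ‖delayPhi r μp μm (fun θ => delayT b t d θ + shiftT0 t η θ)‖ₑ ≤ ENNReal.ofReal (q * (‖d‖ + L)) :=
    calc _ ≤ ∫⁻ t in Ioc 0 t₀, (ENNReal.ofReal (C * ‖d‖) * ν (Icc (-r) 0)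
            + ∫⁻ θ in Icc (-r) 0, ‖shiftT0 t η θ‖ₑ ∂ν) :=
          setLIntegral_mono' measurableSet_Ioc fun t ht =>
            enorm_delayPhi_delayT_add_shiftT0_le b (ht.2.trans ht₀r) μp μm d η
      _ = ENNReal.ofReal (C * ‖d‖) * ν (Icc (-r) 0) * ENNReal.ofReal t₀
            + ∫⁻ t in Ioc 0 t₀, ∫⁻ θ in Icc (-r) 0, ‖shiftT0 t η θ‖ₑ ∂ν := by
          rw [lintegral_add_left measurable_const, setLIntegral_const, Real.volume_Ioc, sub_zero]
      _ ≤ ENNReal.ofReal (C * ‖d‖) * ν (Icc (-r) 0) * ENNReal.ofReal t₀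
            + ν (Icc (-r) 0) * ENNReal.ofReal t₀ ^ (1 / 2 : ℝ)
              * (∫⁻ u in Icc (-r) 0, ‖η u‖ₑ ^ 2) ^ (1 / 2 : ℝ) := by
          gcongr
          exact lintegral_lintegral_enorm_shiftT0_le hη r t₀ ν
      _ = ENNReal.ofReal (t₀ * (M * C) * ‖d‖ + √t₀ * M * L) := by
          rw [hν, hL, ENNReal.ofReal_rpow_of_nonneg ht₀.le (by norm_num), ← Real.sqrt_eq_rpow,
            ← ENNReal.ofReal_mul (by positivity), ← ENNReal.ofReal_mul (by positivity),
            ← ENNReal.ofReal_mul (by positivity), ← ENNReal.ofReal_mul (by positivity),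
            ← ENNReal.ofReal_add (by positivity) (by positivity)]
          ring_nf
      _ ≤ ENNReal.ofReal (q * (‖d‖ + L)) := by
          gcongr
          nlinarith [norm_nonneg d, Real.sqrt_nonneg (∫ s in Icc (-r) 0, ‖η s‖ ^ 2)]
  -- `norm_integral_le_lintegral_norm` needs no integrability of the integrand in `t`.
  rw [intervalIntegral.integral_of_le ht₀.le]
  refine (Real.le_norm_self _).trans ((norm_integral_le_lintegral_norm _).trans ?_)
  simp only [norm_norm, ofReal_norm]
  exact ENNReal.toReal_le_of_le_ofReal (by positivity) hbound

/-- smallness of the Miyadera–Voigt integral.  For every `q ∈ (0,1)` there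
exists `t₀ ∈ (0,r]` such that for all `d ∈ ℝⁿ` and all measurable square-integrable
`η : [-r,0] → ℝⁿ`,
`∫₀^{t₀} ‖Φ(T_t d + T₀(t)η)‖ dt ≤ q (‖d‖ + ‖η‖_{L²([-r,0];ℝⁿ)})`. -/
theorem statement12
    (r : ℝ) (hr : 0 < r) (n : ℕ) (b : Fin n → ℝ)
    (μp μm : Measure ℝ) [IsFiniteMeasure μp] [IsFiniteMeasure μm]
    (q : ℝ) (hq0 : 0 < q) (hq1 : q < 1) :
    ∃ t₀ : ℝ, 0 < t₀ ∧ t₀ ≤ r ∧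
      ∀ (d : EuclideanSpace ℝ (Fin n)) (η : ℝ → EuclideanSpace ℝ (Fin n)),
        Measurable η → IntegrableOn (fun s => ‖η s‖ ^ 2) (Icc (-r) 0) →
        ∫ t in (0:ℝ)..t₀, ‖delayPhi r μp μm (fun θ => delayT b t d θ + shiftT0 t η θ)‖
          ≤ q * (‖d‖ + Real.sqrt (∫ s in Icc (-r) 0, ‖η s‖ ^ 2)) :=
  statement12_general r hr n b μp μm q hq0
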